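/- Let S be a supercharacter theory of a finite group G and let g, h ∈ G. Then ∑_{χ ∈ BCh(S)} χ(g)·conj(χ(h)) / χ(1) equals |G| / |cl_S(g)| if h ∈ cl_S(g), and equals 0 otherwise. -/

import Mathlib

open scoped Classical

noncomputable section

/-- The set of irreducible complex characters of `G`, as functions `G → ℂ`. -/
def Irr (G : Type) [Group G] : Set (G → ℂ) :=
  {χ | ∃ V : FDRep ℂ G, CategoryTheory.Simple V ∧ χ = fun g => V.character g}

/-- For a set `X` of characters, `σ_X = ∑_{ψ ∈ X} ψ(1)·ψ`. -/
def sigmaChar {G : Type} [Group G] (X : Set (G → ℂ)) : G → ℂ :=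
  fun g => ∑ᶠ ψ ∈ X, ψ 1 * ψ g

/-- A supercharacter theory of a finite group `G`: a partition `parts` of `Irr G`
together with a partition `classes` of `G` such that `{1}` is a part,
the two partitions have the same number of parts, and each `σ_X` for `X ∈ parts`
is constant on each part of `classes`. -/
structure SuperCharTheory (G : Type) [Group G] [Fintype G] where
  parts : Set (Set (G → ℂ))
  classes : Set (Set G)
  parts_nonempty : ∀ X ∈ parts, X.Nonempty
  parts_disjoint : parts.PairwiseDisjoint id
  parts_cover : ⋃₀ parts = Irr G
  classes_nonempty : ∀ K ∈ classes, K.Nonempty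
  classes_disjoint : classes.PairwiseDisjoint id
  classes_cover : ⋃₀ classes = Set.univ
  one_mem : ({1} : Set G) ∈ classes
  card_eq : parts.ncard = classes.ncard
  sigma_const : ∀ X ∈ parts, ∀ K ∈ classes, ∀ g ∈ K, ∀ h ∈ K,
    sigmaChar X g = sigmaChar X h

/-- The set of basic `S`-characters (supercharacters) of a supercharacter theory. -/
def BCh {G : Type} [Group G] [Fintype G] (S : SuperCharTheory G) : Set (G → ℂ) :=
  sigmaChar '' S.parts

/-- The superclass sum `K̂ = ∑_{g ∈ K} g` in the complex group algebra. -/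
def classSum {G : Type} [Group G] (K : Set G) : MonoidAlgebra ℂ G :=
  ∑ᶠ g ∈ K, MonoidAlgebra.of ℂ G g

/-!
The basic characters are orthogonal, `∑_g σ_X(g) conj(σ_Y(g)) = δ_{XY} |G| σ_X(1)`, because
distinct irreducible characters are orthogonal and distinct parts are disjoint. As each `σ_X` is
constant on superclasses, this reads `A D Aᴴ = E` for the supercharacter table `A`, with
`D = diag |K|` and `E = diag (|G| σ_X(1))`. Since `A` is square (`|𝒳| = |𝒦|`), it follows that
`Aᴴ E⁻¹ A = D⁻¹`, which is the column orthogonality.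

That `conj(χ(g)) = χ(g⁻¹)` comes from `ρ(g)` being diagonalizable with eigenvalues roots of unity,
on which inversion is complex conjugation.
-/

namespace Module.End

open LinearMap

section Field

variable {K V : Type*} [Field K] [AddCommGroup V] [Module K V] [FiniteDimensional K V]

theorem trace_eq_finsum_mul_finrank_eigenspace {f g : End K V}
    (hf : ⨆ μ, f.eigenspace μ = ⊤) (c : K → K) (hg : ∀ μ, ∀ v ∈ f.eigenspace μ, g v = c μ • v) :
    trace K V g = ∑ᶠ μ, c μ * finrank K (f.eigenspace μ) := by
  have hind := f.eigenspaces_iSupIndep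
  have hfin : {μ | f.eigenspace μ ≠ ⊥}.Finite := WellFoundedGT.finite_ne_bot_of_iSupIndep hind
  have hmaps : ∀ μ, Set.MapsTo g (f.eigenspace μ) (f.eigenspace μ) := fun μ v hv => by
    rw [SetLike.mem_coe, hg μ v hv]
    exact Submodule.smul_mem _ _ hv
  rw [trace_eq_sum_trace_restrict'
      (DirectSum.isInternal_submodule_of_iSupIndep_of_iSup_eq_top hind hf) hfin hmaps,
    finsum_eq_sum_of_support_subset _ (s := hfin.toFinset) ?_]
  · refine Finset.sum_congr rfl fun μ _ => ?_
    have hres : g.restrict (hmaps μ) = c μ • LinearMap.id :=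
      LinearMap.ext fun v => Subtype.ext (hg μ v v.2)
    rw [hres, map_smul, trace_id, smul_eq_mul]
  · intro μ hμ
    rw [Set.Finite.coe_toFinset]
    exact fun h => hμ (by simp [Submodule.finrank_eq_zero.mpr h])

end Field

variable {V : Type*} [AddCommGroup V] [Module ℂ V] [FiniteDimensional ℂ V]

theorem trace_eq_conj_trace_of_pow_eq_one {f g : End ℂ V} {k : ℕ} (hk : k ≠ 0)
    (hfk : f ^ k = 1) (hgf : g * f = 1) : trace ℂ V g = starRingEnd ℂ (trace ℂ V f) := by
  have hsemi : f.IsSemisimple := by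
    refine isSemisimple_of_squarefree_aeval_eq_zero
      (Polynomial.separable_X_pow_sub_C (1 : ℂ) (by exact_mod_cast hk) one_ne_zero).squarefree ?_
    simp [hfk]
  have hf := hsemi.iSup_eigenspace_eq_top
  have hfv : ∀ μ, ∀ v ∈ f.eigenspace μ, f v = μ • v := fun μ v hv => mem_eigenspace_iff.mp hv
  have hgv : ∀ μ, ∀ v ∈ f.eigenspace μ, g v = μ⁻¹ • v := by
    intro μ v hv
    have hv' : v = μ • g v := calc
      v = (g * f) v := by rw [hgf, one_apply]
      _ = μ • g v := by rw [mul_apply, hfv μ v hv, map_smul]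
    rcases eq_or_ne μ 0 with rfl | hμ
    · rw [hv', zero_smul, map_zero, smul_zero]
    · rw [hv', smul_smul, inv_mul_cancel₀ hμ, one_smul, ← hv']
  rw [trace_eq_finsum_mul_finrank_eigenspace hf _ hgv,
    trace_eq_finsum_mul_finrank_eigenspace hf _root_.id hfv]
  refine .trans ?_ ((starRingEnd ℂ).toAddMonoidHom.map_finsum_of_injective
    (RingHom.injective _) _).symm
  refine finsum_congr fun μ => ?_
  rcases eq_or_ne (f.eigenspace μ) ⊥ with h | h
  · simp [h]
  · have hμk : μ ^ k = 1 := by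
      obtain ⟨v, hv, hv0⟩ := Submodule.exists_mem_ne_zero_of_ne_bot h
      have hvk := HasEigenvector.pow_apply ⟨hv, hv0⟩ k
      rw [hfk, one_apply] at hvk
      have : (μ ^ k - 1) • v = 0 := by rw [sub_smul, one_smul, ← hvk, sub_self]
      exact sub_eq_zero.mp ((smul_eq_zero.mp this).resolve_right hv0)
    simp [Complex.inv_eq_conj (Complex.norm_eq_one_of_pow_eq_one hμk hk)]

end Module.End

namespace FDRep

variable {G : Type} [Group G]

theorem char_inv [Finite G] (V : FDRep ℂ G) (g : G) :
    V.character g⁻¹ = starRingEnd ℂ (V.character g) :=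
  Module.End.trace_eq_conj_trace_of_pow_eq_one (orderOf_pos g).ne'
    (by rw [← map_pow, pow_orderOf_eq_one, map_one]) (by rw [← map_mul, inv_mul_cancel, map_one])

theorem sum_char_mul_conj_char [Fintype G] (V W : FDRep ℂ G) [CategoryTheory.Simple V]
    [CategoryTheory.Simple W] :
    ∑ g, V.character g * starRingEnd ℂ (W.character g) =
      if Nonempty (V ≅ W) then (Fintype.card G : ℂ) else 0 := by
  have hG : (Nat.card G : ℂ) ≠ 0 := Nat.cast_ne_zero.mpr Nat.card_pos.ne'
  have : Invertible (Nat.card G : ℂ) := invertibleOfNonzero hG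
  have h := char_orthonormal V W
  rw [inv_mul_eq_iff_eq_mul₀ hG, Nat.card_eq_fintype_card] at h
  simp_rw [← char_inv, h]
  split_ifs <;> simp

end FDRep

section Irr

variable {G : Type} [Group G] [Fintype G]

theorem sum_mul_conj_of_mem_Irr {χ φ : G → ℂ} (hχ : χ ∈ Irr G) (hφ : φ ∈ Irr G) :
    ∑ g, χ g * starRingEnd ℂ (φ g) = if χ = φ then (Fintype.card G : ℂ) else 0 := by
  obtain ⟨V, _, rfl⟩ := hχ
  obtain ⟨W, _, rfl⟩ := hφ
  rw [FDRep.sum_char_mul_conj_char]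
  by_cases hVW : Nonempty (V ≅ W)
  · rw [if_pos hVW, if_pos (funext fun g => by rw [FDRep.char_iso hVW.some])]
  · refine (if_neg hVW).trans (if_neg fun hχφ => ?_).symm
    have hVV := FDRep.sum_char_mul_conj_char V V
    have hVW0 := FDRep.sum_char_mul_conj_char V W
    rw [if_pos ⟨CategoryTheory.Iso.refl V⟩] at hVV
    rw [if_neg hVW, ← show V.character = W.character from hχφ, hVV] at hVW0
    exact Nat.cast_ne_zero.mpr Fintype.card_ne_zero hVW0

theorem ne_zero_of_mem_Irr {χ : G → ℂ} (hχ : χ ∈ Irr G) : χ ≠ 0 := by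
  rintro rfl
  have h := sum_mul_conj_of_mem_Irr hχ hχ
  simp only [Pi.zero_apply, zero_mul, Finset.sum_const_zero, if_true] at h
  exact Nat.cast_ne_zero.mpr Fintype.card_ne_zero h.symm

theorem linearIndependent_Irr : LinearIndependent ℂ ((↑) : Irr G → G → ℂ) := by
  refine RCLike.linearIndependent_of_ne_zero_of_wInner_one_eq_zero
    (fun χ => ne_zero_of_mem_Irr χ.2) fun χ φ hχφ => ?_
  have h := sum_mul_conj_of_mem_Irr φ.2 χ.2
  rw [if_neg (Subtype.coe_injective.ne hχφ.symm)] at h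
  simpa [RCLike.wInner_one_eq_sum, mul_comm] using h

theorem finite_Irr : (Irr G).Finite :=
  linearIndependent_Irr.setFinite

open scoped ComplexOrder in
theorem apply_one_pos_of_mem_Irr {χ : G → ℂ} (hχ : χ ∈ Irr G) : 0 < χ 1 := by
  obtain ⟨V, _, rfl⟩ := id hχ
  show 0 < V.character 1
  rw [FDRep.char_one, Nat.cast_pos, Module.finrank_pos_iff, ← not_subsingleton_iff_nontrivial]
  intro hV
  refine ne_zero_of_mem_Irr hχ (funext fun g => ?_)
  simp [FDRep.character, Subsingleton.elim (V.ρ g) 0]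

end Irr

theorem sigmaChar_eq_sum {G : Type} [Group G] {X : Set (G → ℂ)} (hX : X.Finite) (g : G) :
    sigmaChar X g = ∑ ψ ∈ hX.toFinset, ψ 1 * ψ g :=
  finsum_mem_eq_finite_toFinset_sum _ hX

section sigmaChar

open scoped ComplexOrder

variable {G : Type} [Group G] [Fintype G]

theorem sigmaChar_one_pos {X : Set (G → ℂ)} (hX : X ⊆ Irr G) (hne : X.Nonempty) :
    0 < sigmaChar X 1 := by
  have hXfin := finite_Irr.subset hX
  rw [sigmaChar_eq_sum hXfin]
  obtain ⟨ψ, hψ⟩ := hne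
  refine Finset.sum_pos' (fun φ hφ => ?_) ⟨ψ, hXfin.mem_toFinset.mpr hψ, ?_⟩
  · have := apply_one_pos_of_mem_Irr (hX (hXfin.mem_toFinset.mp hφ))
    positivity
  · have := apply_one_pos_of_mem_Irr (hX hψ)
    positivity

theorem sum_sigmaChar_mul_conj {X Y : Set (G → ℂ)} (hX : X ⊆ Irr G) (hY : Y ⊆ Irr G) :
    ∑ g, sigmaChar X g * starRingEnd ℂ (sigmaChar Y g) =
      Fintype.card G * sigmaChar (X ∩ Y) 1 := by
  have hXfin := finite_Irr.subset hX
  have hYfin := finite_Irr.subset hY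
  calc ∑ g, sigmaChar X g * starRingEnd ℂ (sigmaChar Y g)
      = ∑ ψ ∈ hXfin.toFinset, ∑ φ ∈ hYfin.toFinset,
          ψ 1 * starRingEnd ℂ (φ 1) * ∑ g, ψ g * starRingEnd ℂ (φ g) := by
        simp_rw [sigmaChar_eq_sum hXfin, sigmaChar_eq_sum hYfin, map_sum, Finset.sum_mul_sum,
          Finset.mul_sum]
        rw [Finset.sum_comm]
        refine Finset.sum_congr rfl fun ψ _ => ?_
        rw [Finset.sum_comm]
        refine Finset.sum_congr rfl fun φ _ => Finset.sum_congr rfl fun g _ => ?_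
        rw [map_mul]
        ring
    _ = ∑ ψ ∈ hXfin.toFinset, if ψ ∈ Y then Fintype.card G * (ψ 1 * ψ 1) else 0 := by
        refine Finset.sum_congr rfl fun ψ hψ => ?_
        have hψ' := hX (hXfin.mem_toFinset.mp hψ)
        rw [Finset.sum_congr rfl fun φ hφ => by
          rw [sum_mul_conj_of_mem_Irr hψ' (hY (hYfin.mem_toFinset.mp hφ)), mul_ite, mul_zero],
          Finset.sum_ite_eq]
        have hconj : starRingEnd ℂ (ψ 1) = ψ 1 :=
          (apply_one_pos_of_mem_Irr hψ').le.isSelfAdjoint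
        simp only [Set.Finite.mem_toFinset, hconj]
        split_ifs <;> ring
    _ = Fintype.card G * sigmaChar (X ∩ Y) 1 := by
        rw [sigmaChar_eq_sum (hXfin.inter_of_left Y), Finset.mul_sum, ← Finset.sum_filter]
        congr 1
        ext ψ
        simp

end sigmaChar

namespace Matrix

variable {m n K : Type*} [Fintype m] [Fintype n] [DecidableEq m] [DecidableEq n] [Field K]

theorem mul_diagonal_inv_mul_eq_diagonal_inv (e : m ≃ n) {A : Matrix m n K} {B : Matrix n m K}
    {d : n → K} {ε : m → K} (hd : ∀ i, d i ≠ 0) (hε : ∀ i, ε i ≠ 0)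
    (h : A * diagonal d * B = diagonal ε) : B * diagonal ε⁻¹ * A = diagonal d⁻¹ := by
  have hright : A * (diagonal d * B * diagonal ε⁻¹) = 1 := by
    rw [← Matrix.mul_assoc, ← Matrix.mul_assoc, h, diagonal_mul_diagonal, ← diagonal_one]
    exact congrArg diagonal (funext fun i => mul_inv_cancel₀ (hε i))
  have hleft := (mul_eq_one_comm_of_equiv e).mp hright
  have hdd : diagonal d⁻¹ * diagonal d = 1 := by
    rw [diagonal_mul_diagonal, ← diagonal_one]
    exact congrArg diagonal (funext fun i => inv_mul_cancel₀ (hd i))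
  calc B * diagonal ε⁻¹ * A = diagonal d⁻¹ * (diagonal d * B * diagonal ε⁻¹ * A) := by
        simp only [← Matrix.mul_assoc, hdd, Matrix.one_mul]
    _ = diagonal d⁻¹ := by rw [hleft, Matrix.mul_one]

end Matrix

namespace SuperCharTheory

open Matrix

variable {G : Type} [Group G] [Fintype G] (S : SuperCharTheory G)

theorem subset_Irr {X : Set (G → ℂ)} (hX : X ∈ S.parts) : X ⊆ Irr G :=
  S.parts_cover ▸ Set.subset_sUnion_of_mem hX

theorem finite_parts : S.parts.Finite :=
  finite_Irr.finite_subsets.subset fun _ hX => S.subset_Irr hX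

noncomputable instance : Fintype S.parts := S.finite_parts.fintype

open scoped ComplexOrder in
theorem sigmaChar_one_ne_zero {X : Set (G → ℂ)} (hX : X ∈ S.parts) : sigmaChar X 1 ≠ 0 :=
  (sigmaChar_one_pos (S.subset_Irr hX) (S.parts_nonempty X hX)).ne'

theorem sum_sigmaChar_mul_conj_of_mem_parts {X Y : Set (G → ℂ)} (hX : X ∈ S.parts)
    (hY : Y ∈ S.parts) :
    ∑ g, sigmaChar X g * starRingEnd ℂ (sigmaChar Y g) =
      if X = Y then Fintype.card G * sigmaChar X 1 else 0 := by
  rw [sum_sigmaChar_mul_conj (S.subset_Irr hX) (S.subset_Irr hY)]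
  split_ifs with hXY
  · rw [hXY, Set.inter_self]
  · have hdisj : Disjoint X Y := S.parts_disjoint hX hY hXY
    simp [hdisj.inter_eq, sigmaChar]

theorem injOn_sigmaChar : Set.InjOn sigmaChar S.parts := by
  intro X hX Y hY hXY
  by_contra hne
  have h := S.sum_sigmaChar_mul_conj_of_mem_parts hX hY
  rw [if_neg hne, hXY, S.sum_sigmaChar_mul_conj_of_mem_parts hY hY, if_pos rfl] at h
  exact mul_ne_zero (Nat.cast_ne_zero.mpr Fintype.card_ne_zero) (S.sigmaChar_one_ne_zero hY) h

theorem finsum_mem_BCh (F : (G → ℂ) → ℂ) :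
    ∑ᶠ χ ∈ BCh S, F χ = ∑ X : S.parts, F (sigmaChar X) := by
  rw [BCh, finsum_mem_image S.injOn_sigmaChar, ← finsum_set_coe_eq_finsum_mem,
    finsum_eq_sum_of_fintype]

theorem exists_mem_classes (g : G) : ∃ K ∈ S.classes, g ∈ K :=
  Set.mem_sUnion.mp (S.classes_cover ▸ Set.mem_univ g)

def cl (g : G) : S.classes :=
  ⟨_, (S.exists_mem_classes g).choose_spec.1⟩

theorem mem_cl (g : G) : g ∈ (S.cl g : Set G) :=
  (S.exists_mem_classes g).choose_spec.2

theorem cl_eq_iff {g : G} {K : S.classes} : S.cl g = K ↔ g ∈ (K : Set G) :=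
  ⟨fun h => h ▸ S.mem_cl g, fun hg => Subtype.ext <|
    S.classes_disjoint.elim (S.cl g).2 K.2 (Set.not_disjoint_iff.mpr ⟨g, S.mem_cl g, hg⟩)⟩

def rep (K : S.classes) : G :=
  (S.classes_nonempty K K.2).some

theorem sigmaChar_rep_cl {X : Set (G → ℂ)} (hX : X ∈ S.parts) (g : G) :
    sigmaChar X (S.rep (S.cl g)) = sigmaChar X g :=
  S.sigma_const X hX _ (S.cl g).2 _ (S.classes_nonempty _ (S.cl g).2).some_mem g (S.mem_cl g)

theorem sum_comp_cl (F : S.classes → ℂ) :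
    ∑ g, F (S.cl g) = ∑ K : S.classes, (K : Set G).ncard * F K := by
  rw [← Finset.sum_fiberwise Finset.univ S.cl]
  refine Finset.sum_congr rfl fun K _ => ?_
  rw [Finset.sum_congr rfl fun g hg => by rw [(Finset.mem_filter.mp hg).2], Finset.sum_const,
    nsmul_eq_mul, Set.ncard_eq_toFinset_card']
  congr 3
  ext g
  simp [S.cl_eq_iff]

def superCharTable : Matrix S.parts S.classes ℂ :=
  fun X K => sigmaChar X (S.rep K)

theorem superCharTable_row_orthogonality :
    S.superCharTable * diagonal (fun K : S.classes => ((K : Set G).ncard : ℂ)) *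
        S.superCharTableᴴ =
      diagonal (fun X : S.parts => (Fintype.card G : ℂ) * sigmaChar X (1 : G)) := by
  ext X Y
  have hrow := S.sum_sigmaChar_mul_conj_of_mem_parts X.2 Y.2
  rw [← Finset.sum_congr rfl fun g _ => by
      rw [← S.sigmaChar_rep_cl X.2 g, ← S.sigmaChar_rep_cl Y.2 g],
    S.sum_comp_cl fun K => sigmaChar X (S.rep K) * starRingEnd ℂ (sigmaChar Y (S.rep K))] at hrow
  rw [mul_apply, diagonal_apply]
  simp only [Subtype.ext_iff]
  rw [← hrow]
  refine Finset.sum_congr rfl fun K _ => ?_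
  simp only [mul_diagonal, conjTranspose_apply, superCharTable, Complex.star_def]
  ring

theorem superCharTable_column_orthogonality :
    S.superCharTableᴴ *
        diagonal (fun X : S.parts => (Fintype.card G : ℂ) * sigmaChar X (1 : G))⁻¹ *
        S.superCharTable =
      diagonal (fun K : S.classes => ((K : Set G).ncard : ℂ))⁻¹ := by
  refine mul_diagonal_inv_mul_eq_diagonal_inv (Finite.card_eq.mp S.card_eq).some
    (fun K => ?_) (fun X => ?_) S.superCharTable_row_orthogonality
  · exact Nat.cast_ne_zero.mpr ((Set.ncard_pos K.1.toFinite).mpr (S.classes_nonempty K K.2)).ne'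
  · exact mul_ne_zero (Nat.cast_ne_zero.mpr Fintype.card_ne_zero) (S.sigmaChar_one_ne_zero X.2)

theorem sum_sigmaChar_mul_conj_div (g h : G) :
    ∑ X : S.parts, sigmaChar X g * starRingEnd ℂ (sigmaChar X h) / sigmaChar X (1 : G) =
      if S.cl h = S.cl g then (Fintype.card G : ℂ) / ((S.cl g : Set G).ncard : ℂ) else 0 := by
  have hcol := congrFun (congrFun S.superCharTable_column_orthogonality (S.cl h)) (S.cl g)
  rw [mul_apply, diagonal_apply] at hcol
  simp only [mul_diagonal, conjTranspose_apply, superCharTable, S.sigmaChar_rep_cl,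
    Subtype.coe_prop, Pi.inv_apply, Complex.star_def] at hcol
  calc ∑ X : S.parts, sigmaChar X g * starRingEnd ℂ (sigmaChar X h) / sigmaChar X (1 : G)
      = Fintype.card G * ∑ X : S.parts, starRingEnd ℂ (sigmaChar X h) *
          ((Fintype.card G : ℂ) * sigmaChar X (1 : G))⁻¹ * sigmaChar X g := by
        rw [Finset.mul_sum]
        refine Finset.sum_congr rfl fun X _ => ?_
        field_simp
    _ = _ := by
        rw [hcol]
        split_ifs with hcl
        · rw [hcl, div_eq_mul_inv]
        · rw [mul_zero]

end SuperCharTheory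

/-- **Column orthogonality for supercharacters.** For `g` in the `S`-class `K` and any
`h ∈ G`, `∑_{χ ∈ BCh(S)} χ(g)·conj(χ(h))/χ(1)` equals `|G|/|cl_S(g)|` if
`h ∈ cl_S(g) = K`, and `0` otherwise. -/
theorem supercharacter_column_orthogonality {G : Type} [Group G] [Fintype G]
    (S : SuperCharTheory G)
    (K : Set G) (hK : K ∈ S.classes) (g : G) (hg : g ∈ K) (h : G) :
    ∑ᶠ χ ∈ BCh S, χ g * (starRingEnd ℂ) (χ h) / χ 1
      = if h ∈ K then (Fintype.card G : ℂ) / (K.ncard : ℂ) else 0 := by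
  have hclg : S.cl g = ⟨K, hK⟩ := S.cl_eq_iff.mpr hg
  rw [S.finsum_mem_BCh fun χ => χ g * starRingEnd ℂ (χ h) / χ 1, S.sum_sigmaChar_mul_conj_div,
    hclg]
  simp only [S.cl_eq_iff]
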